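/- arXiv:2203.10058 — 2 statements merged into one kernel-verified Lean document; each statement's English description precedes it below -/
import Mathlib

section
/- For q ∈ ℝ with |q| < 1, in any *-representation π of the q-CCR algebra (generated by a_1,…,a_n with relations a_i* a_j = δ_{ij}·1 + q·a_j a_i*) by bounded operators on a Hilbert space, one has ‖π(a_i)‖ ≤ 1/√(1−|q|) for each i. -/
/-!
Taking norms in `a* a = 1 + q a a*` and using the C*-identity `‖a* a‖ = ‖a a*‖ = ‖a‖²` gives
`‖a‖² ≤ 1 + |q| ‖a‖²`, i.e. `‖a‖² (1 - |q|) ≤ 1`.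
-/

theorem CStarRing.norm_one_le {E : Type*} [NormedRing E] [StarRing E] [CStarRing E] :
    ‖(1 : E)‖ ≤ 1 := by
  rcases subsingleton_or_nontrivial E with _ | _
  · simp [Subsingleton.elim (1 : E) 0]
  · exact CStarRing.norm_one.le

theorem CStarRing.norm_sq_le_of_star_mul_self_eq {𝕜 E : Type*} [NormedField 𝕜] [NormedRing E]
    [StarRing E] [CStarRing E] [NormedAlgebra 𝕜 E] {a : E} {c : 𝕜}
    (h : star a * a = 1 + c • (a * star a)) : ‖a‖ ^ 2 ≤ 1 + ‖c‖ * ‖a‖ ^ 2 :=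
  calc ‖a‖ ^ 2 = ‖star a * a‖ := by rw [CStarRing.norm_star_mul_self, sq]
    _ ≤ ‖(1 : E)‖ + ‖c • (a * star a)‖ := h ▸ norm_add_le _ _
    _ ≤ 1 + ‖c‖ * ‖a‖ ^ 2 := by
      rw [norm_smul, CStarRing.norm_self_mul_star, ← sq]
      gcongr
      exact CStarRing.norm_one_le

theorem Real.le_one_div_sqrt_of_sq_le {t r : ℝ} (ht : 0 ≤ t) (hr : r < 1)
    (h : t ^ 2 ≤ 1 + r * t ^ 2) : t ≤ 1 / √(1 - r) := by
  have hs : 0 < √(1 - r) := Real.sqrt_pos.mpr (by linarith)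
  rw [le_div_iff₀ hs, ← Real.sqrt_sq ht, ← Real.sqrt_mul (sq_nonneg t)]
  exact Real.sqrt_le_one.mpr (by nlinarith)

/-- In any *-representation of the q-CCR relations
`aᵢ* aⱼ = δᵢⱼ·1 + q·aⱼ aᵢ*` by bounded operators on a Hilbert space,
each generator satisfies `‖aᵢ‖ ≤ 1/√(1-|q|)`. -/
theorem qCCR_norm_bound {H : Type*} [NormedAddCommGroup H] [InnerProductSpace ℂ H]
    [CompleteSpace H] (n : ℕ) (q : ℝ) (hq : |q| < 1) (a : Fin n → H →L[ℂ] H)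
    (hrel : ∀ i j, star (a i) * a j =
      (if i = j then (1 : H →L[ℂ] H) else 0) + (q : ℂ) • (a j * star (a i))) :
    ∀ i, ‖a i‖ ≤ 1 / Real.sqrt (1 - |q|) := by
  intro i
  have hii : star (a i) * a i = 1 + (q : ℂ) • (a i * star (a i)) := by simpa using hrel i i
  have hsq := CStarRing.norm_sq_le_of_star_mul_self_eq hii
  rw [Complex.norm_real, Real.norm_eq_abs] at hsq
  exact Real.le_one_div_sqrt_of_sq_le (norm_nonneg _) hq hsq
end

section
/- On the q-deformed Fock space, the commutator of the left annihilation operator and right creation operator restricted to the n-particle space F_n^q is scalar: [(L_i^q)*, R_j^q] restricted to F_n^q equals δ_{ij}·q^n·id. Consequently, [(L_i^q)*, R_j^q] is a compact operator on F^q. -/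
/-!
Annihilating a letter of `w ++ [j]` at one of the first `|w|` positions gives the same word
as annihilating it in `w` and appending `j` afterwards, with the same weight `q^m`; so
`(L_i^q)* R_j^q` and `R_j^q (L_i^q)*` differ only by the term that removes the appended `j`
itself, which sits at position `|w|` and carries the weight `δ_{ij} q^{|w|}`.
-/

/-- The algebraic q-deformed Fock space over `ℂ^n`: the free vector space on words
in the letters `1,…,n` (a word of length `k` encodes a basis tensor of `(ℂ^n)^{⊗k}`). -/
abbrev FockSpace (n : ℕ) := List (Fin n) →₀ ℂ

/-- The right creation operator `R_j^q : ξ ↦ ξ ⊗ e_j`. -/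
noncomputable def creR (n : ℕ) (j : Fin n) : FockSpace n →ₗ[ℂ] FockSpace n :=
  Finsupp.lmapDomain ℂ ℂ (fun w : List (Fin n) => w ++ [j])

/-- The left annihilation operator `(L_i^q)*`, the q-adjoint of the left creation
operator, acting by `(L_i^q)*(e_{i_1}⊗…⊗e_{i_k}) = Σ_m q^{m-1} δ_{i,i_m} e_{i_1}⊗…ê_{i_m}…⊗e_{i_k}`. -/
noncomputable def annL (n : ℕ) (q : ℝ) (i : Fin n) : FockSpace n →ₗ[ℂ] FockSpace n :=
  Finsupp.lift (FockSpace n) ℂ (List (Fin n)) fun w =>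
    ∑ m : Fin w.length, ((q : ℂ) ^ (m : ℕ)) •
      (if w.get m = i then Finsupp.single (w.eraseIdx m) (1 : ℂ) else 0)

section
variable {n : ℕ}

theorem creR_single (j : Fin n) (v : List (Fin n)) (c : ℂ) :
    creR n j (Finsupp.single v c) = Finsupp.single (v ++ [j]) c :=
  Finsupp.mapDomain_single

theorem annL_single (q : ℝ) (i : Fin n) (v : List (Fin n)) :
    annL n q i (Finsupp.single v 1) =
      ∑ m : Fin v.length, ((q : ℂ) ^ (m : ℕ)) •
        (if v.get m = i then Finsupp.single (v.eraseIdx m) (1 : ℂ) else 0) := by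
  simp [annL]

theorem annL_single_append_singleton (q : ℝ) (i j : Fin n) (w : List (Fin n)) :
    annL n q i (Finsupp.single (w ++ [j]) 1) =
      creR n j (annL n q i (Finsupp.single w 1)) +
        (if i = j then (q : ℂ) ^ w.length else 0) • Finsupp.single w 1 := by
  have hlen : (w ++ [j]).length = w.length + 1 := by simp
  rw [annL_single, annL_single, map_sum, ← Equiv.sum_comp (finCongr hlen.symm),
    Fin.sum_univ_castSucc]
  congr 1
  · refine Finset.sum_congr rfl fun m _ => ?_
    rw [map_smul, apply_ite (creR n j), map_zero, creR_single]
    simp [List.getElem_append_left m.isLt, List.eraseIdx_append_of_lt_length m.isLt]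
  · simp [List.eraseIdx_append_of_length_le le_rfl, eq_comm]
end

theorem commutator_annL_creR_general (n : ℕ) (q : ℝ) (i j : Fin n)
    (w : List (Fin n)) :
    (annL n q i ∘ₗ creR n j - creR n j ∘ₗ annL n q i) (Finsupp.single w 1) =
      (if i = j then ((q : ℂ) ^ w.length) else 0) • Finsupp.single w 1 := by
  rw [LinearMap.sub_apply, LinearMap.comp_apply, LinearMap.comp_apply, creR_single,
    annL_single_append_singleton, add_sub_cancel_left]

/-- the commutator `[(L_i^q)*, R_j^q]` acts on each basis tensor of the
m-particle space `F_m^q` (a word `w` of length `m`) as the scalar `δ_{ij} q^m`; i.e.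
its restriction to `F_m^q` is `δ_{ij} q^m · id` (in particular, since `|q|<1`, these
scalars tend to `0`, which is why the commutator is compact on the completed Fock space). -/
theorem commutator_annL_creR (n : ℕ) (q : ℝ) (hq : |q| < 1) (i j : Fin n)
    (w : List (Fin n)) :
    (annL n q i ∘ₗ creR n j - creR n j ∘ₗ annL n q i) (Finsupp.single w 1) =
      (if i = j then ((q : ℂ) ^ w.length) else 0) • Finsupp.single w 1 :=
  commutator_annL_creR_general n q i j w
end
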